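/- arXiv:1806.07020 — 6 statements merged into one kernel-verified Lean document; each statement's English description precedes it below -/
import Mathlib

section
/- Let X be a metric space, let g and h be bijective self-isometries of X, and let x, y ∈ X. For p, q ∈ X write H(p,q) = {z ∈ X : dist(z,p) ≤ dist(z,q)}. If the four sets H(g x, x), H(g⁻¹ x, x), H(h y, y), H(h⁻¹ y, y) are pairwise disjoint, then g and h generate a free group of rank two: the group homomorphism from the free group on two generators to the group of bijective self-isometries of X sending the two generators to g and h is injective. -/
/-!
An isometry `c` maps the bisector half-space `H(p, q)` onto `H(c p, c q)`, and everything outside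
`H(c⁻¹ x, x)` lies in `H(x, c⁻¹ x)`; hence `c` sends the complement of `H(c⁻¹ x, x)` into
`H(c x, x)`. Since `p ∈ H(p, q)`, four pairwise disjoint such half-spaces for `g^{±1}` and `h^{±1}`
are exactly the configuration of the ping-pong lemma.
-/

open Pointwise Function

universe u v

/-- Mathlib's version needs the index type in the universe of `G`, which fails for `Fin 2` and
`G = X ≃ᵢ X`. -/
theorem FreeGroup.injective_lift_of_ping_pong' {ι : Type u} {G : Type max u v} {α : Type*}
    [Nontrivial ι] [Group G] [MulAction G α] (a : ι → G) (X Y : ι → Set α)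
    (hXnonempty : ∀ i, (X i).Nonempty) (hXdisj : Pairwise (Disjoint on X))
    (hYdisj : Pairwise (Disjoint on Y)) (hXYdisj : ∀ i j, Disjoint (X i) (Y j))
    (hX : ∀ i, a i • (Y i)ᶜ ⊆ X i) (hY : ∀ i, a⁻¹ i • (X i)ᶜ ⊆ Y i) :
    Injective (FreeGroup.lift a) := by
  have hlift : FreeGroup.lift (a ∘ ULift.down) =
      (FreeGroup.lift a).comp (FreeGroup.freeGroupCongr Equiv.ulift).toMonoidHom := by
    ext; simp
  have hinj := FreeGroup.injective_lift_of_ping_pong (a ∘ ULift.down) (X ∘ ULift.down)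
    (Y ∘ ULift.down) (fun i => hXnonempty i.down) (hXdisj.comp_of_injective ULift.down_injective)
    (hYdisj.comp_of_injective ULift.down_injective) (fun i j => hXYdisj i.down j.down)
    (fun i => hX i.down) (fun i => hY i.down)
  rw [hlift, MonoidHom.coe_comp] at hinj
  exact hinj.of_comp_right (FreeGroup.freeGroupCongr Equiv.ulift).surjective

theorem FreeGroup.injective_lift_fin_two_of_ping_pong {G α : Type*} [Group G] [MulAction G α]
    (a b : G) (Xa Ya Xb Yb : Set α) (hXa : Xa.Nonempty) (hXb : Xb.Nonempty)
    (hdisj : [Xa, Ya, Xb, Yb].Pairwise Disjoint)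
    (ha : a • Yaᶜ ⊆ Xa) (ha' : a⁻¹ • Xaᶜ ⊆ Ya) (hb : b • Ybᶜ ⊆ Xb) (hb' : b⁻¹ • Xbᶜ ⊆ Yb) :
    Injective (FreeGroup.lift ![a, b]) := by
  simp only [List.pairwise_cons, List.mem_cons, List.not_mem_nil, List.Pairwise.nil, and_true,
    forall_eq_or_imp] at hdisj
  obtain ⟨⟨hXaYa, hXaXb, hXaYb, -⟩, ⟨hYaXb, hYaYb, -⟩, ⟨hXbYb, -⟩, -⟩ := hdisj
  refine FreeGroup.injective_lift_of_ping_pong' _ ![Xa, Xb] ![Ya, Yb] ?_ ?_ ?_ ?_ ?_ ?_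
  · simp [Fin.forall_fin_two, hXa, hXb]
  · simpa [pairwise_fin_succ_iff_of_isSymm, onFun] using hXaXb
  · simpa [pairwise_fin_succ_iff_of_isSymm, onFun] using hYaYb
  · simpa [Fin.forall_fin_two] using ⟨⟨hXaYa, hXaYb⟩, hYaXb.symm, hXbYb⟩
  · simpa [Fin.forall_fin_two] using ⟨ha, hb⟩
  · simpa [Fin.forall_fin_two] using ⟨ha', hb'⟩

namespace IsometryEquiv

variable {X : Type*} [PseudoEMetricSpace X]

instance applyMulAction : MulAction (X ≃ᵢ X) X where
  smul e z := e z
  one_smul _ := rfl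
  mul_smul _ _ _ := rfl

instance : IsIsometricSMul (X ≃ᵢ X) X := ⟨fun e => e.isometry⟩

end IsometryEquiv

def bisectorHalfSpace {X : Type*} [PseudoMetricSpace X] (p q : X) : Set X :=
  {z | dist z p ≤ dist z q}

section BisectorHalfSpace

variable {X : Type*} [PseudoMetricSpace X]

lemma self_mem_bisectorHalfSpace (p q : X) : p ∈ bisectorHalfSpace p q := by
  simp [bisectorHalfSpace]

lemma compl_bisectorHalfSpace_subset (p q : X) :
    (bisectorHalfSpace p q)ᶜ ⊆ bisectorHalfSpace q p :=
  fun z hz => le_of_not_ge (show ¬dist z p ≤ dist z q from hz)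

variable {G : Type*} [Group G] [MulAction G X] [IsIsometricSMul G X]

lemma smul_bisectorHalfSpace (c : G) (p q : X) :
    c • bisectorHalfSpace p q = bisectorHalfSpace (c • p) (c • q) := by
  ext z
  rw [Set.mem_smul_set_iff_inv_smul_mem]
  simp only [bisectorHalfSpace, Set.mem_ofPred_eq]
  rw [← dist_smul c, ← dist_smul c (c⁻¹ • z) q, smul_inv_smul]

lemma smul_compl_bisectorHalfSpace_inv_smul_subset (c : G) (x : X) :
    c • (bisectorHalfSpace (c⁻¹ • x) x)ᶜ ⊆ bisectorHalfSpace (c • x) x :=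
  calc c • (bisectorHalfSpace (c⁻¹ • x) x)ᶜ
      ⊆ c • bisectorHalfSpace x (c⁻¹ • x) :=
        Set.smul_set_mono (compl_bisectorHalfSpace_subset _ _)
    _ = bisectorHalfSpace (c • x) x := by rw [smul_bisectorHalfSpace, smul_inv_smul]

theorem FreeGroup.injective_lift_of_pairwise_disjoint_bisectorHalfSpace (g h : G) (x y : X)
    (hdisj : [bisectorHalfSpace (g • x) x, bisectorHalfSpace (g⁻¹ • x) x,
      bisectorHalfSpace (h • y) y, bisectorHalfSpace (h⁻¹ • y) y].Pairwise Disjoint) :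
    Injective (FreeGroup.lift ![g, h]) := by
  refine FreeGroup.injective_lift_fin_two_of_ping_pong g h _ _ _ _
    ⟨_, self_mem_bisectorHalfSpace _ _⟩ ⟨_, self_mem_bisectorHalfSpace _ _⟩ hdisj
    (smul_compl_bisectorHalfSpace_inv_smul_subset g x) ?_
    (smul_compl_bisectorHalfSpace_inv_smul_subset h y) ?_
  · simpa using smul_compl_bisectorHalfSpace_inv_smul_subset g⁻¹ x
  · simpa using smul_compl_bisectorHalfSpace_inv_smul_subset h⁻¹ y

end BisectorHalfSpace

/-- Ping-pong for bisector half-spaces: if the four half-spaces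
`H(g x, x)`, `H(g⁻¹ x, x)`, `H(h y, y)`, `H(h⁻¹ y, y)` are pairwise disjoint,
then `g, h` generate a free group of rank two. -/
theorem pingpong_halfspaces_free {X : Type*} [MetricSpace X]
    (g h : X ≃ᵢ X) (x y : X)
    (hdisj : ([{z : X | dist z (g x) ≤ dist z x},
               {z : X | dist z (g⁻¹ x) ≤ dist z x},
               {z : X | dist z (h y) ≤ dist z y},
               {z : X | dist z (h⁻¹ y) ≤ dist z y}] : List (Set X)).Pairwise Disjoint) :
    Function.Injective ⇑(FreeGroup.lift ![g, h] : FreeGroup (Fin 2) →* (X ≃ᵢ X)) :=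
  FreeGroup.injective_lift_of_pairwise_disjoint_bisectorHalfSpace g h x y hdisj
end

section
/- Let Y be a metric space and δ ≥ 0. Say that a point w lies between points p and q if dist(p,w) + dist(w,q) = dist(p,q). Assume Y has δ-thin triangles in the following sense: for all a, z₁, z₂ ∈ Y and every point w between z₁ and z₂, there exists v ∈ Y with dist(w,v) ≤ δ such that v lies between a and z₁ or v lies between a and z₂. Let A ⊆ Y and a ∈ A be such that A is starlike with respect to a, i.e. for every z ∈ A every point between a and z belongs to A. Then A is δ-quasiconvex: for all z₁, z₂ ∈ A, every point w between z₁ and z₂ satisfies infDist(w, A) ≤ δ. -/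
theorem starlike_quasiconvex_general {Y : Type*} [MetricSpace Y] (δ : ℝ)
    (hthin : ∀ a z₁ z₂ w : Y, dist z₁ w + dist w z₂ = dist z₁ z₂ →
      ∃ v : Y, dist w v ≤ δ ∧
        (dist a v + dist v z₁ = dist a z₁ ∨ dist a v + dist v z₂ = dist a z₂))
    (A : Set Y) (a : Y)
    (hstar : ∀ z ∈ A, ∀ w : Y, dist a w + dist w z = dist a z → w ∈ A) :
    ∀ z₁ ∈ A, ∀ z₂ ∈ A, ∀ w : Y,
      dist z₁ w + dist w z₂ = dist z₁ z₂ → Metric.infDist w A ≤ δ := by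
  intro z₁ hz₁ z₂ hz₂ w hw
  obtain ⟨v, hwv, hv⟩ := hthin a z₁ z₂ w hw
  have hvA : v ∈ A := hv.elim (hstar z₁ hz₁ v) (hstar z₂ hz₂ v)
  exact (Metric.infDist_le_dist_of_mem hvA).trans hwv

/-- Starlike subsets of a space with `δ`-thin triangles are `δ`-quasiconvex
(Lemma 3.3 of the paper). Here `w` lies between `p` and `q` iff
`dist p w + dist w q = dist p q`. -/
theorem starlike_quasiconvex {Y : Type*} [MetricSpace Y] (δ : ℝ) (hδ : 0 ≤ δ)
    (hthin : ∀ a z₁ z₂ w : Y, dist z₁ w + dist w z₂ = dist z₁ z₂ →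
      ∃ v : Y, dist w v ≤ δ ∧
        (dist a v + dist v z₁ = dist a z₁ ∨ dist a v + dist v z₂ = dist a z₂))
    (A : Set Y) (a : Y) (ha : a ∈ A)
    (hstar : ∀ z ∈ A, ∀ w : Y, dist a w + dist w z = dist a z → w ∈ A) :
    ∀ z₁ ∈ A, ∀ z₂ ∈ A, ∀ w : Y,
      dist z₁ w + dist w z₂ = dist z₁ z₂ → Metric.infDist w A ≤ δ :=
  starlike_quasiconvex_general δ hthin A a hstar
end

section
/- For all real numbers a, b, c ≥ 0, if cosh(a) ≥ cosh(b) · cosh(c), then a ≥ b + c − 2·arccosh(√2), where arccosh(√2) = log(1+√2). -/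
/-!
Since `eˣ / 2 ≤ cosh x` for all `x` and `cosh a ≤ eᵃ` for `a ≥ 0`, the hypothesis gives
`e^(b + c) / 4 ≤ eᵃ`, i.e. `a ≥ b + c - log 4`; and `log 4 ≤ 2 log (1 + √2)` because
`(1 + √2)² = 3 + 2√2 ≥ 4`.
-/

namespace Real

lemma cosh_le_exp_of_nonneg {x : ℝ} (hx : 0 ≤ x) : cosh x ≤ exp x :=
  sub_nonneg.1 (exp_sub_cosh x ▸ sinh_nonneg_iff.2 hx)

lemma exp_div_two_le_cosh (x : ℝ) : exp x / 2 ≤ cosh x := by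
  rw [cosh_eq]
  linarith [exp_pos (-x)]

lemma add_sub_log_four_le_of_cosh_mul_cosh_le_cosh {a b c : ℝ} (ha : 0 ≤ a)
    (h : cosh b * cosh c ≤ cosh a) : b + c - log 4 ≤ a := by
  rw [← exp_le_exp]
  calc exp (b + c - log 4) = exp b / 2 * (exp c / 2) := by
        rw [exp_sub, exp_add, exp_log four_pos]; ring
    _ ≤ cosh b * cosh c :=
        mul_le_mul (exp_div_two_le_cosh b) (exp_div_two_le_cosh c) (by positivity)
          (cosh_pos b).le
    _ ≤ cosh a := h
    _ ≤ exp a := cosh_le_exp_of_nonneg ha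

lemma log_four_le_two_mul_log_one_add_sqrt_two : log 4 ≤ 2 * log (1 + √2) := by
  have hsq : (4 : ℝ) ≤ (1 + √2) ^ 2 := by
    nlinarith [sq_sqrt (zero_le_two : (0 : ℝ) ≤ 2), one_le_sqrt.2 one_le_two]
  calc log 4 ≤ log ((1 + √2) ^ 2) := log_le_log four_pos hsq
    _ = 2 * log (1 + √2) := by rw [log_pow]; norm_num

end Real

theorem cosh_ineq_length_lower_bound_general (a b c : ℝ)
    (ha : 0 ≤ a)
    (h : Real.cosh a ≥ Real.cosh b * Real.cosh c) :
    a ≥ b + c - 2 * Real.log (1 + Real.sqrt 2) := by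
  linarith [Real.add_sub_log_four_le_of_cosh_mul_cosh_le_cosh ha h,
    Real.log_four_le_two_mul_log_one_add_sqrt_two]

/-- Comparison form of Lemma 3.1: if `cosh a ≥ cosh b * cosh c` then
`a ≥ b + c - 2 * arccosh √2`, where `arccosh √2 = log (1 + √2)`. -/
theorem cosh_ineq_length_lower_bound (a b c : ℝ)
    (ha : 0 ≤ a) (hb : 0 ≤ b) (hc : 0 ≤ c)
    (h : Real.cosh a ≥ Real.cosh b * Real.cosh c) :
    a ≥ b + c - 2 * Real.log (1 + Real.sqrt 2) :=
  cosh_ineq_length_lower_bound_general a b c ha h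
end

section
/- Let ℍ be the hyperbolic plane (the upper half-plane with its hyperbolic metric). Let x, x₊, x̂₊, x₊' ∈ ℍ with x₊ ≠ x̂₊ lie on a common geodesic in this order, i.e. dist(x,x₊) + dist(x₊,x̂₊) + dist(x̂₊,x₊') = dist(x,x₊'). If dist(x̂₊, x₊') ≥ dist(x, x₊) + 2·arccosh(√2), then H(x₊, x̂₊) ⊆ H(x, x₊'): every z ∈ ℍ with dist(z,x₊) ≤ dist(z,x̂₊) satisfies dist(z,x) ≤ dist(z,x₊'). -/
/-!
Move `x` and `x₊'` onto the imaginary axis by an element of `SL(2, ℝ)`, with `im x ≤ im x₊'`.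
Since `|log im z - log im w| ≤ dist z w`, with equality only when `re z = re w`, the points
`x₊` and `x̂₊` between them are on the axis as well, at heights `e₀ ≤ e₁ < e₂ ≤ e₃`. For `w = i e`
on the axis, `cosh (dist z w) = (e + |z|² / e) / (2 im z)`; hence `z ∈ H(x₊, x̂₊)` means
`|z|² ≤ e₁ e₂`, while the length hypothesis gives `2 e₁ e₂ ≤ e₀ e₃` (it only needs
`log 2 ≤ 2 arccosh √2`). Then `e₀ + |z|² / e₀ ≤ 2 e₁ e₂ / e₀ ≤ e₃`, i.e. `z ∈ H(x, x₊')`.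
-/

open Real
open scoped MatrixGroups

def halfspace {X : Type*} [Dist X] (p q : X) : Set X := {z | dist z p ≤ dist z q}

lemma smul_mem_halfspace_smul_iff {M X : Type*} [PseudoMetricSpace X] [SMul M X]
    [IsIsometricSMul M X] (g : M) {p q z : X} :
    g • z ∈ halfspace (g • p) (g • q) ↔ z ∈ halfspace p q := by
  simp only [halfspace, Set.mem_ofPred_eq, dist_smul]

lemma le_mul_of_add_div_le_add_div {N s t : ℝ} (hs : 0 < s) (hst : s < t)
    (h : s + N / s ≤ t + N / t) : N ≤ s * t := by
  have ht : 0 < t := hs.trans hst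
  rw [add_div' _ _ _ hs.ne', add_div' _ _ _ ht.ne', div_le_div_iff₀ hs ht] at h
  have : N * (t - s) ≤ s * t * (t - s) := by linear_combination h
  exact le_of_mul_le_mul_right this (sub_pos.mpr hst)

lemma add_div_le_add_div_of_two_mul_le {N e₀ e₁ e₂ e₃ : ℝ} (hN : 0 ≤ N) (h₀ : 0 < e₀)
    (h₀₁ : e₀ ≤ e₁) (h₁₂ : e₁ < e₂) (h : 2 * (e₁ * e₂) ≤ e₀ * e₃)
    (hN₁₂ : e₁ + N / e₁ ≤ e₂ + N / e₂) : e₀ + N / e₀ ≤ e₃ + N / e₃ := by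
  have h₁ : 0 < e₁ := h₀.trans_le h₀₁
  have hN_le := le_mul_of_add_div_le_add_div h₁ h₁₂ hN₁₂
  have h₃ : 0 < e₃ := by
    have : 0 < e₀ * e₃ := by nlinarith
    exact pos_of_mul_pos_right this h₀.le
  calc e₀ + N / e₀ ≤ e₀ + e₁ * e₂ / e₀ := by gcongr
    _ ≤ 2 * (e₁ * e₂) / e₀ := by
      rw [add_div' _ _ _ h₀.ne', div_le_div_iff_of_pos_right h₀]
      nlinarith
    _ ≤ e₃ := by rw [div_le_iff₀ h₀]; linarith
    _ ≤ e₃ + N / e₃ := le_add_of_nonneg_right (by positivity)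

lemma log_two_le_two_mul_log_one_add_sqrt_two : log 2 ≤ 2 * log (1 + √2) := by
  rw [show 2 * log (1 + √2) = log ((1 + √2) ^ 2) by rw [log_pow]; norm_num]
  exact log_le_log two_pos (by nlinarith [sq_sqrt zero_le_two, sqrt_nonneg 2])

namespace UpperHalfPlane

noncomputable def inversionAt (r : ℝ) : SL(2, ℝ) :=
  ⟨!![0, -1; 1, -r], by simp [Matrix.det_fin_two]⟩

lemma coe_inversionAt_smul (r : ℝ) (z : ℍ) :
    ((inversionAt r • z : ℍ) : ℂ) = -((z : ℂ) - r)⁻¹ := by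
  rw [coe_specialLinearGroup_apply]
  simp [inversionAt, sub_eq_add_neg, neg_div]

lemma re_inversionAt_smul (r : ℝ) (z : ℍ) :
    (inversionAt r • z).re = (r - z.re) / Complex.normSq ((z : ℂ) - r) := by
  rw [← coe_re, coe_inversionAt_smul, Complex.neg_re, Complex.inv_re, ← neg_div]
  simp

lemma im_inversionAt_smul (r : ℝ) (z : ℍ) :
    (inversionAt r • z).im = z.im / Complex.normSq ((z : ℂ) - r) := by
  rw [← coe_im, coe_inversionAt_smul, Complex.neg_im, Complex.inv_im, neg_div, neg_neg]
  simp

lemma normSq_coe_sub_ofReal (z : ℍ) (r : ℝ) :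
    Complex.normSq ((z : ℂ) - r) = (z.re - r) ^ 2 + z.im ^ 2 := by
  simp [Complex.normSq_apply, sq]

-- Inverting at an endpoint of the geodesic semicircle `|w - c| = ρ` straightens it into a
-- vertical line.
lemma re_inversionAt_smul_of_mem_circle {z : ℍ} {c ρ : ℝ} (hρ : 0 < ρ)
    (hz : (z.re - c) ^ 2 + z.im ^ 2 = ρ ^ 2) :
    (inversionAt (c + ρ) • z).re = 1 / (2 * ρ) := by
  have hN : Complex.normSq ((z : ℂ) - ↑(c + ρ)) = 2 * ρ * (c + ρ - z.re) := by
    rw [normSq_coe_sub_ofReal]; linear_combination hz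
  have hd : c + ρ - z.re ≠ 0 := by
    intro h
    have : z.im ^ 2 = 0 := by nlinarith
    exact z.im_ne_zero (pow_eq_zero_iff two_ne_zero |>.mp this)
  rw [re_inversionAt_smul, hN]
  field_simp

lemma exists_circle_through {a b : ℍ} (hab : a.re ≠ b.re) :
    ∃ c ρ : ℝ, 0 < ρ ∧ (a.re - c) ^ 2 + a.im ^ 2 = ρ ^ 2 ∧ (b.re - c) ^ 2 + b.im ^ 2 = ρ ^ 2 := by
  obtain ⟨c, hc⟩ : ∃ c : ℝ, c * (2 * (a.re - b.re)) = a.re ^ 2 + a.im ^ 2 - b.re ^ 2 - b.im ^ 2 :=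
    ⟨_, div_mul_cancel₀ _ (mul_ne_zero two_ne_zero (sub_ne_zero.mpr hab))⟩
  have hpos : 0 < (a.re - c) ^ 2 + a.im ^ 2 := by have := a.im_pos; positivity
  refine ⟨c, √((a.re - c) ^ 2 + a.im ^ 2), sqrt_pos.mpr hpos, ?_, ?_⟩
  · rw [sq_sqrt hpos.le]
  · rw [sq_sqrt hpos.le]; linear_combination hc

lemma re_inversionAt_smul_of_re_eq {z : ℍ} {r : ℝ} (hz : z.re = r) :
    (inversionAt r • z).re = 0 := by
  simp [re_inversionAt_smul, hz]

lemma im_inversionAt_smul_of_re_eq {z : ℍ} {r : ℝ} (hz : z.re = r) :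
    (inversionAt r • z).im = z.im⁻¹ := by
  rw [im_inversionAt_smul, normSq_coe_sub_ofReal, hz, sub_self]
  have := z.im_ne_zero
  field_simp
  ring

lemma exists_SL2_smul_re_eq (a b : ℍ) : ∃ g : SL(2, ℝ), (g • a).re = (g • b).re := by
  by_cases hab : a.re = b.re
  · exact ⟨1, by simpa using hab⟩
  obtain ⟨c, ρ, hρ, ha, hb⟩ := exists_circle_through hab
  exact ⟨inversionAt (c + ρ), by
    rw [re_inversionAt_smul_of_mem_circle hρ ha, re_inversionAt_smul_of_mem_circle hρ hb]⟩

lemma exists_SL2_smul_re_eq_zero (a b : ℍ) :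
    ∃ g : SL(2, ℝ), (g • a).re = 0 ∧ (g • b).re = 0 := by
  obtain ⟨g, hg⟩ := exists_SL2_smul_re_eq a b
  refine ⟨inversionAt (g • a).re * g, ?_, ?_⟩ <;> rw [mul_smul]
  · exact re_inversionAt_smul_of_re_eq rfl
  · exact re_inversionAt_smul_of_re_eq hg.symm

lemma exists_SL2_smul_re_eq_zero_im_le (a b : ℍ) :
    ∃ g : SL(2, ℝ), (g • a).re = 0 ∧ (g • b).re = 0 ∧ (g • a).im ≤ (g • b).im := by
  obtain ⟨h, ha, hb⟩ := exists_SL2_smul_re_eq_zero a b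
  rcases le_or_gt (h • a).im (h • b).im with hle | hlt
  · exact ⟨h, ha, hb, hle⟩
  refine ⟨inversionAt 0 * h, ?_, ?_, ?_⟩
  · rw [mul_smul]; exact re_inversionAt_smul_of_re_eq ha
  · rw [mul_smul]; exact re_inversionAt_smul_of_re_eq hb
  · rw [mul_smul, mul_smul, im_inversionAt_smul_of_re_eq ha, im_inversionAt_smul_of_re_eq hb]
    exact inv_anti₀ (im_pos _) hlt.le

lemma re_eq_of_dist_eq_dist_log_im {z w : ℍ} (h : dist z w = dist (log z.im) (log w.im)) :
    z.re = w.re := by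
  have hcosh := congrArg cosh h
  rw [cosh_dist, Real.dist_eq, cosh_abs, ← log_div z.im_ne_zero w.im_ne_zero,
    cosh_log (div_pos z.im_pos w.im_pos), Complex.dist_eq, Complex.sq_norm,
    Complex.normSq_apply] at hcosh
  have hz := z.im_pos
  have hw := w.im_pos
  simp only [Complex.sub_re, Complex.sub_im, coe_re, coe_im] at hcosh
  field_simp at hcosh
  nlinarith [sq_nonneg (z.re - w.re)]

lemma re_eq_of_dist_add_dist_eq {a b c : ℍ} (hac : a.re = c.re)
    (h : dist a b + dist b c = dist a c) : b.re = a.re := by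
  refine (re_eq_of_dist_eq_dist_log_im (le_antisymm ?_ (dist_log_im_le a b))).symm
  linarith [dist_log_im_le b c, dist_of_re_eq hac, dist_triangle (log a.im) (log b.im) (log c.im)]

lemma cosh_dist_of_re_eq_zero (z : ℍ) {w : ℍ} (hw : w.re = 0) :
    cosh (dist z w) = (w.im + Complex.normSq z / w.im) / (2 * z.im) := by
  rw [cosh_dist, Complex.dist_eq, Complex.sq_norm, Complex.normSq_apply, Complex.normSq_apply]
  simp only [Complex.sub_re, Complex.sub_im, coe_re, coe_im, hw]
  have := z.im_ne_zero
  have := w.im_ne_zero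
  field_simp
  ring

lemma dist_le_dist_iff_of_re_eq_zero (z : ℍ) {w w' : ℍ} (hw : w.re = 0) (hw' : w'.re = 0) :
    dist z w ≤ dist z w' ↔
      w.im + Complex.normSq z / w.im ≤ w'.im + Complex.normSq z / w'.im := by
  rw [← abs_of_nonneg (dist_nonneg (x := z) (y := w)),
    ← abs_of_nonneg (dist_nonneg (x := z) (y := w')), ← cosh_le_cosh, cosh_dist_of_re_eq_zero z hw, cosh_dist_of_re_eq_zero z hw']
  exact div_le_div_iff_of_pos_right (by have := z.im_pos; positivity)

lemma halfspace_subset_of_im_le {a₀ a₁ a₂ a₃ : ℍ} (h₀ : a₀.re = 0) (h₁ : a₁.re = 0)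
    (h₂ : a₂.re = 0) (h₃ : a₃.re = 0) (h₀₁ : a₀.im ≤ a₁.im) (h₁₂ : a₁.im < a₂.im)
    (h : 2 * (a₁.im * a₂.im) ≤ a₀.im * a₃.im) : halfspace a₁ a₂ ⊆ halfspace a₀ a₃ := by
  intro z hz
  simp only [halfspace, Set.mem_ofPred_eq, dist_le_dist_iff_of_re_eq_zero z h₀ h₃,
    dist_le_dist_iff_of_re_eq_zero z h₁ h₂] at hz ⊢
  exact add_div_le_add_div_of_two_mul_le (Complex.normSq_nonneg _) a₀.im_pos h₀₁ h₁₂ h hz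

lemma halfspace_subset_of_re_eq_zero {a₀ a₁ a₂ a₃ : ℍ} (h₀ : a₀.re = 0) (h₃ : a₃.re = 0)
    (h₀₃ : a₀.im ≤ a₃.im) (hne : a₁ ≠ a₂)
    (horder : dist a₀ a₁ + dist a₁ a₂ + dist a₂ a₃ = dist a₀ a₃)
    (hlen : dist a₀ a₁ + log 2 ≤ dist a₂ a₃) : halfspace a₁ a₂ ⊆ halfspace a₀ a₃ := by
  have h₁ : a₁.re = 0 := by
    refine (re_eq_of_dist_add_dist_eq (h₀.trans h₃.symm) ?_).trans h₀
    linarith [dist_triangle a₁ a₂ a₃, dist_triangle a₀ a₁ a₃]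
  have h₂ : a₂.re = 0 := by
    refine (re_eq_of_dist_add_dist_eq (h₀.trans h₃.symm) ?_).trans h₀
    linarith [dist_triangle a₀ a₁ a₂, dist_triangle a₀ a₂ a₃]
  have hdist : ∀ {z w : ℍ}, z.re = 0 → w.re = 0 → dist z w = |log w.im - log z.im| := by
    intro z w hz hw
    rw [dist_of_re_eq (hz.trans hw.symm), Real.dist_eq, abs_sub_comm]
  set t₀ := log a₀.im
  set t₁ := log a₁.im
  set t₂ := log a₂.im
  set t₃ := log a₃.im
  rw [hdist h₀ h₁, hdist h₁ h₂, hdist h₂ h₃, hdist h₀ h₃,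
    abs_of_nonneg (sub_nonneg.mpr (log_le_log a₀.im_pos h₀₃))] at horder
  rw [hdist h₀ h₁, hdist h₂ h₃] at hlen
  have hpos : 0 < |t₂ - t₁| := hdist h₁ h₂ ▸ dist_pos.mpr hne
  -- `|u| + |v| + |w| = u + v + w` forces `u, v, w ≥ 0`
  have l₀₁ : 0 ≤ t₁ - t₀ := by
    linarith [abs_nonneg (t₁ - t₀), le_abs_self (t₂ - t₁), le_abs_self (t₃ - t₂)]
  have l₁₂ : 0 ≤ t₂ - t₁ := by
    linarith [abs_nonneg (t₂ - t₁), le_abs_self (t₁ - t₀), le_abs_self (t₃ - t₂)]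
  have l₂₃ : 0 ≤ t₃ - t₂ := by
    linarith [abs_nonneg (t₃ - t₂), le_abs_self (t₁ - t₀), le_abs_self (t₂ - t₁)]
  rw [abs_of_nonneg l₀₁, abs_of_nonneg l₂₃] at hlen
  rw [abs_of_nonneg l₁₂] at hpos
  have := a₀.im_pos; have := a₁.im_pos; have := a₂.im_pos; have := a₃.im_pos
  refine halfspace_subset_of_im_le h₀ h₁ h₂ h₃ ?_ ?_ ?_
  · exact (log_le_log_iff (by positivity) (by positivity)).mp (by linarith)
  · exact (log_lt_log_iff (by positivity) (by positivity)).mp (by linarith)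
  · rw [← log_le_log_iff (by positivity) (by positivity), log_mul (by positivity) (by positivity),
      log_mul (by positivity) (by positivity), log_mul (by positivity) (by positivity)]
    linarith

theorem halfspace_subset_of_dist_add_log_two_le {x xp xhp xp' : ℍ} (hne : xp ≠ xhp)
    (horder : dist x xp + dist xp xhp + dist xhp xp' = dist x xp')
    (hlen : dist x xp + log 2 ≤ dist xhp xp') : halfspace xp xhp ⊆ halfspace x xp' := by
  obtain ⟨g, h₀, h₃, h₀₃⟩ := exists_SL2_smul_re_eq_zero_im_le x xp'
  have hsub := halfspace_subset_of_re_eq_zero h₀ h₃ h₀₃ ((MulAction.injective g).ne hne)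
    (by simpa only [dist_smul] using horder) (by simpa only [dist_smul] using hlen)
  exact fun z hz ↦
    (smul_mem_halfspace_smul_iff g).mp (hsub ((smul_mem_halfspace_smul_iff g).mpr hz))

end UpperHalfPlane

/-- Corollary 3.2 (cor:2bisectors) for the hyperbolic plane: if `x, x₊, x̂₊, x₊'` lie
in this order on a common geodesic and `dist x̂₊ x₊' ≥ dist x x₊ + 2 arccosh √2`, then
the half-space `H(x₊, x̂₊)` is contained in the half-space `H(x, x₊')`. -/
theorem halfspace_nested (x xp xhp xp' : UpperHalfPlane) (hne : xp ≠ xhp)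
    (horder : dist x xp + dist xp xhp + dist xhp xp' = dist x xp')
    (hlen : dist xhp xp' ≥ dist x xp + 2 * Real.log (1 + Real.sqrt 2)) :
    ∀ z : UpperHalfPlane, dist z xp ≤ dist z xhp → dist z x ≤ dist z xp' :=
  fun _ hz ↦ UpperHalfPlane.halfspace_subset_of_dist_add_log_two_le hne horder
    (by linarith [log_two_le_two_mul_log_one_add_sqrt_two]) hz
end

section
/- Let ℍ be the hyperbolic plane (the upper half-plane with its hyperbolic metric), and let D ≥ 0 and c(D) := 8π·tanh(D/4)/(1 − tanh(D/4)²). Let A, B, C ∈ ℍ satisfy dist(A,C) = dist(B,C) and dist(A,B) ≤ D, and let τ ≥ 0. Suppose A' lies between A and C with dist(A,A') = τ (i.e. dist(A,A') + dist(A',C) = dist(A,C) and dist(A,A') = τ), and similarly B' lies between B and C with dist(B,B') = τ. Then dist(A',B') ≤ c(D)·exp(−τ). -/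
open UpperHalfPlane

/-- The constant `c(D) = 8π tanh(D/4) / (1 - tanh(D/4)²)` from Lemma 3.6. -/
noncomputable def cFun (D : ℝ) : ℝ :=
  8 * Real.pi * Real.tanh (D / 4) / (1 - Real.tanh (D / 4) ^ 2)

/-!
In the upper half-plane the hyperbolic circle of radius `s` about `c` is the Euclidean circle
with center `c.center s` and radius `c.im * sinh s`. If `p` lies on the geodesic segment from `z`
to `c`, the circles about `c` and `z` through `p` are externally tangent at `p`, so `p` divides
the segment between their Euclidean centers in the ratio of the radii. Feeding these coordinates
into `sinh (d / 2) = |z - w| / (2 √(z.im w.im))` gives, for the isosceles configuration with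
`L = d(A, C)`, the exact identity
`sinh (d(A', B') / 2) * sinh L = sinh (d(A, B) / 2) * sinh (L - τ)`.
Since `sinh (L - τ) ≤ exp (-τ) * sinh L` and `x ≤ sinh x`, this yields
`d(A', B') ≤ 2 sinh (D / 2) exp (-τ)`, and `cFun D = 4π sinh (D / 2)`.
-/

open Real

theorem smul_sub_eq_smul_sub_of_dist_add_dist_eq {E : Type*} [NormedAddCommGroup E]
    [NormedSpace ℝ E] [StrictConvexSpace ℝ E] {a p b : E}
    (h : dist a p + dist p b = dist a b) : dist p b • (p - a) = dist a p • (b - p) := by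
  rw [dist_eq_norm', dist_eq_norm', dist_eq_norm', ← sub_add_sub_cancel b p a, add_comm] at h
  simpa only [dist_eq_norm'] using (sameRay_iff_norm_add.mpr h.symm).norm_smul_eq

theorem norm_smul_sub_smul_sq {F : Type*} [NormedAddCommGroup F] [InnerProductSpace ℝ F]
    (x y : F) :
    ‖‖y‖ • x - ‖x‖ • y‖ ^ 2 = ‖x‖ * ‖y‖ * (‖x - y‖ ^ 2 - (‖x‖ - ‖y‖) ^ 2) := by
  rw [norm_sub_sq_real, norm_sub_sq_real, norm_smul, norm_smul, real_inner_smul_left,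
    real_inner_smul_right, Real.norm_of_nonneg (norm_nonneg _),
    Real.norm_of_nonneg (norm_nonneg _)]
  ring

theorem sinh_sub_le_exp_neg_mul_sinh {x τ : ℝ} (hτ : 0 ≤ τ) :
    sinh (x - τ) ≤ exp (-τ) * sinh x := by
  have h : exp (-τ + -x) ≤ exp (-(x - τ)) := exp_le_exp.mpr (by linarith)
  rw [sinh_eq, sinh_eq, mul_div_assoc', mul_sub, ← exp_add, ← exp_add,
    show -τ + x = x - τ by ring]
  linarith

namespace UpperHalfPlane

theorem dist_coe_center_center_sq (z w : ℍ) (r : ℝ) :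
    dist (z.center r : ℂ) (w.center r) ^ 2
      = dist (z : ℂ) w ^ 2 + (z.im * sinh r - w.im * sinh r) ^ 2 := by
  simp only [Complex.dist_eq, Complex.sq_norm, Complex.normSq_apply, Complex.sub_re,
    Complex.sub_im, coe_re, coe_im, center_re, center_im]
  linear_combination (z.im - w.im) ^ 2 * cosh_sq r

theorem dist_coe_center_center_of_dist_eq_add {z c : ℍ} {s t : ℝ} (hs : 0 ≤ s) (ht : 0 ≤ t)
    (h : dist z c = s + t) :
    dist (c.center s : ℂ) (z.center t) = c.im * sinh s + z.im * sinh t := by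
  have hcosh := cosh_dist' z c
  rw [h, cosh_add, eq_div_iff (by positivity)] at hcosh
  refine (sq_eq_sq₀ dist_nonneg (by positivity)).mp ?_
  simp only [Complex.dist_eq, Complex.sq_norm, Complex.normSq_apply, Complex.sub_re,
    Complex.sub_im, coe_re, coe_im, center_re, center_im]
  linear_combination -hcosh + c.im ^ 2 * cosh_sq s + z.im ^ 2 * cosh_sq t

theorem sinh_sq_half_dist_mul (z w : ℍ) :
    sinh (dist z w / 2) ^ 2 * (4 * z.im * w.im) = dist (z : ℂ) w ^ 2 := by
  have him : 0 < z.im * w.im := mul_pos z.im_pos w.im_pos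
  rw [sinh_half_dist, div_pow, mul_pow, sq_sqrt him.le]
  field_simp
  ring

theorem smul_coe_sub_center_of_dist_add_dist_eq {z p c : ℍ}
    (h : dist z p + dist p c = dist z c) :
    (c.im * sinh (dist p c) + z.im * sinh (dist z p)) • ((p : ℂ) - c.center (dist p c))
      = (c.im * sinh (dist p c)) • ((z.center (dist z p) : ℂ) - c.center (dist p c)) := by
  have hpc : dist (c.center (dist p c) : ℂ) p = c.im * sinh (dist p c) := by
    rw [dist_comm, dist_center_dist]
  have hzp : dist (p : ℂ) (z.center (dist z p)) = z.im * sinh (dist z p) := by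
    rw [UpperHalfPlane.dist_comm z p, dist_center_dist]
  have hcz := dist_coe_center_center_of_dist_eq_add dist_nonneg dist_nonneg
    (by rw [← h, add_comm] : dist z c = dist p c + dist z p)
  have hray := smul_sub_eq_smul_sub_of_dist_add_dist_eq (b := (z.center (dist z p) : ℂ))
    (by rw [hpc, hzp, hcz])
  rw [hpc, hzp] at hray
  linear_combination (norm := module) hray

theorem im_mul_of_dist_add_dist_eq {z p c : ℍ} (h : dist z p + dist p c = dist z c) :
    (c.im * sinh (dist p c) + z.im * sinh (dist z p)) * p.im = c.im * z.im * sinh (dist z c) := by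
  have him := congrArg Complex.im (smul_coe_sub_center_of_dist_add_dist_eq h)
  simp only [Complex.real_smul, Complex.mul_im, Complex.ofReal_re, Complex.ofReal_im,
    Complex.sub_im, Complex.sub_re, coe_im, center_im, zero_mul, add_zero] at him
  rw [← h, sinh_add]
  linear_combination him

theorem dist_coe_sq_of_isosceles {A B C A' B' : ℍ}
    (hA : dist A A' + dist A' C = dist A C) (hB : dist B B' + dist B' C = dist B C)
    (hC : dist A' C = dist B' C) (hτ : dist A A' = dist B B') (hL : 0 < dist A C) :
    (C.im * sinh (dist A' C) + A.im * sinh (dist A A'))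
        * (C.im * sinh (dist A' C) + B.im * sinh (dist A A')) * dist (A' : ℂ) B' ^ 2
      = (C.im * sinh (dist A' C)) ^ 2 * dist (A : ℂ) B ^ 2 := by
  have hkA := im_mul_of_dist_add_dist_eq hA
  have hkB := im_mul_of_dist_add_dist_eq hB
  have hv := smul_coe_sub_center_of_dist_add_dist_eq hB
  rw [← hC, ← hτ] at hB hv hkB
  set s := dist A' C
  set t := dist A A'
  set w : ℂ := (C.center s : ℂ)
  set x : ℂ := (A.center t : ℂ) - w
  set y : ℂ := (B.center t : ℂ) - w
  have hx : ‖x‖ = C.im * sinh s + A.im * sinh t := by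
    rw [← dist_eq_norm, dist_comm]
    exact dist_coe_center_center_of_dist_eq_add dist_nonneg dist_nonneg (by rw [← hA, add_comm])
  have hy : ‖y‖ = C.im * sinh s + B.im * sinh t := by
    rw [← dist_eq_norm, dist_comm]
    exact dist_coe_center_center_of_dist_eq_add dist_nonneg dist_nonneg (by rw [← hB, add_comm])
  have hu := smul_coe_sub_center_of_dist_add_dist_eq hA
  rw [← hx] at hu hkA ⊢
  rw [← hy] at hv hkB ⊢
  have hxy_pos : 0 < ‖x‖ * ‖y‖ := by
    have := C.im_pos; have := A.im_pos; have := B.im_pos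
    have hSL : 0 < sinh (t + s) := sinh_pos_iff.mpr (hA ▸ hL)
    rw [← hA] at hkA
    rw [← hB] at hkB
    exact mul_pos ((mul_pos_iff_of_pos_right A'.im_pos).mp (hkA ▸ by positivity))
      ((mul_pos_iff_of_pos_right B'.im_pos).mp (hkB ▸ by positivity))
  have hdiff : (‖x‖ * ‖y‖) • ((A' : ℂ) - B') = (C.im * sinh s) • (‖y‖ • x - ‖x‖ • y) := by
    linear_combination (norm := module) ‖y‖ • hu - ‖x‖ • hv
  have hxy : ‖x - y‖ ^ 2 - (‖x‖ - ‖y‖) ^ 2 = dist (A : ℂ) B ^ 2 := by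
    rw [hx, hy, sub_sub_sub_cancel_right, ← dist_eq_norm, dist_coe_center_center_sq]
    ring
  have hsq := congrArg (‖·‖ ^ 2) hdiff
  simp only [norm_smul, mul_pow, Real.norm_eq_abs, sq_abs, abs_mul] at hsq
  refine mul_left_cancel₀ hxy_pos.ne' ?_
  rw [dist_eq_norm (A' : ℂ), ← hxy]
  linear_combination hsq + (C.im * sinh s) ^ 2 * norm_smul_sub_smul_sq x y

theorem sinh_half_dist_mul_sinh_of_isosceles {A B C A' B' : ℍ}
    (hA : dist A A' + dist A' C = dist A C) (hB : dist B B' + dist B' C = dist B C)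
    (hC : dist A' C = dist B' C) (hτ : dist A A' = dist B B') :
    sinh (dist A' B' / 2) * sinh (dist A C) = sinh (dist A B / 2) * sinh (dist A' C) := by
  rcases (dist_nonneg (x := A) (y := C)).eq_or_lt with hL | hL
  · have hs : dist A' C = 0 := by
      linarith [dist_nonneg (x := A) (y := A'), dist_nonneg (x := A') (y := C)]
    rw [← hL, hs, sinh_zero, mul_zero, mul_zero]
  have himA := im_mul_of_dist_add_dist_eq hA
  have himB := im_mul_of_dist_add_dist_eq hB
  rw [← hC, ← hτ, show dist B C = dist A C by rw [← hA, ← hB, hC, hτ]] at himB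
  have hM : 0 < 4 * C.im ^ 2 * A.im * B.im := by
    have := C.im_pos; have := A.im_pos; have := B.im_pos; positivity
  refine (sq_eq_sq₀ ?_ ?_).mp (mul_right_cancel₀ hM.ne' ?_)
  · exact mul_nonneg (sinh_nonneg_iff.mpr (by positivity)) (sinh_nonneg_iff.mpr hL.le)
  · exact mul_nonneg (sinh_nonneg_iff.mpr (by positivity)) (sinh_nonneg_iff.mpr dist_nonneg)
  calc (sinh (dist A' B' / 2) * sinh (dist A C)) ^ 2 * (4 * C.im ^ 2 * A.im * B.im)
      = sinh (dist A' B' / 2) ^ 2 * (4 * A'.im * B'.im)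
          * ((C.im * sinh (dist A' C) + A.im * sinh (dist A A'))
            * (C.im * sinh (dist A' C) + B.im * sinh (dist A A'))) := by
        have him := congrArg₂ (· * ·) himA himB
        linear_combination (-4 * sinh (dist A' B' / 2) ^ 2) * him
    _ = (sinh (dist A B / 2) * sinh (dist A' C)) ^ 2 * (4 * C.im ^ 2 * A.im * B.im) := by
        rw [sinh_sq_half_dist_mul, mul_comm, dist_coe_sq_of_isosceles hA hB hC hτ hL,
          ← sinh_sq_half_dist_mul]
        ring

theorem sinh_half_dist_le_of_isosceles {A B C A' B' : ℍ}
    (hA : dist A A' + dist A' C = dist A C) (hB : dist B B' + dist B' C = dist B C)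
    (hC : dist A' C = dist B' C) (hτ : dist A A' = dist B B') :
    sinh (dist A' B' / 2) ≤ exp (-dist A A') * sinh (dist A B / 2) := by
  have hAB : 0 ≤ sinh (dist A B / 2) := sinh_nonneg_iff.mpr (by positivity)
  rcases (dist_nonneg (x := A) (y := C)).eq_or_lt with hL | hL
  · have hA'C : dist A' C = 0 := by
      linarith [dist_nonneg (x := A) (y := A'), dist_nonneg (x := A') (y := C)]
    have hA'B' : A' = B' := (dist_eq_zero.mp hA'C).trans (dist_eq_zero.mp (hC ▸ hA'C)).symm
    rw [hA'B', dist_self, zero_div, sinh_zero]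
    exact mul_nonneg (exp_pos _).le hAB
  refine le_of_mul_le_mul_right ?_ (sinh_pos_iff.mpr hL)
  calc sinh (dist A' B' / 2) * sinh (dist A C)
      = sinh (dist A B / 2) * sinh (dist A C - dist A A') := by
        rw [sinh_half_dist_mul_sinh_of_isosceles hA hB hC hτ, ← hA, add_sub_cancel_left]
    _ ≤ sinh (dist A B / 2) * (exp (-dist A A') * sinh (dist A C)) := by
        gcongr
        exact sinh_sub_le_exp_neg_mul_sinh dist_nonneg
    _ = exp (-dist A A') * sinh (dist A B / 2) * sinh (dist A C) := by ring

end UpperHalfPlane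

theorem cFun_eq_four_pi_mul_sinh (D : ℝ) : cFun D = 4 * π * sinh (D / 2) := by
  have hc : cosh (D / 4) ≠ 0 := (cosh_pos _).ne'
  rw [cFun, tanh_eq_sinh_div_cosh, show D / 2 = 2 * (D / 4) by ring, sinh_two_mul]
  field_simp
  linear_combination (-8 * sinh (D / 4)) * cosh_sq (D / 4)

theorem isosceles_decrease_speed_general (D τ : ℝ)
    (A B C A' B' : UpperHalfPlane)
    (hiso : dist A C = dist B C) (hAB : dist A B ≤ D)
    (hA' : dist A A' + dist A' C = dist A C) (hAA' : dist A A' = τ)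
    (hB' : dist B B' + dist B' C = dist B C) (hBB' : dist B B' = τ) :
    dist A' B' ≤ cFun D * Real.exp (-τ) := by
  have hC : dist A' C = dist B' C := by linarith
  have hsinh := sinh_half_dist_le_of_isosceles hA' hB' hC (hAA'.trans hBB'.symm)
  rw [hAA'] at hsinh
  have hD : 0 ≤ sinh (D / 2) := sinh_nonneg_iff.mpr (by linarith [dist_nonneg (x := A) (y := B)])
  calc dist A' B' = 2 * (dist A' B' / 2) := by ring
    _ ≤ 2 * sinh (dist A' B' / 2) := by gcongr; exact self_le_sinh_iff.mpr (by positivity)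
    _ ≤ 2 * (exp (-τ) * sinh (D / 2)) := by
        gcongr
        exact hsinh.trans (by gcongr; exact sinh_le_sinh.mpr (by linarith))
    _ ≤ cFun D * exp (-τ) := by
        rw [cFun_eq_four_pi_mul_sinh]
        have hπ : 0 ≤ 4 * π - 2 := by linarith [pi_gt_three]
        nlinarith [mul_nonneg (mul_nonneg hD (exp_pos (-τ)).le) hπ]

/-- Lemma 3.6 (decrease speed) for the hyperbolic plane: in an isosceles triangle
`ABC` with `dist A C = dist B C` and `dist A B ≤ D`, the points `A', B'` at distance
`τ` from `A, B` along the sides `AC, BC` satisfy `dist A' B' ≤ c(D) exp(-τ)`. -/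
theorem isosceles_decrease_speed (D τ : ℝ) (hD : 0 ≤ D) (hτ : 0 ≤ τ)
    (A B C A' B' : UpperHalfPlane)
    (hiso : dist A C = dist B C) (hAB : dist A B ≤ D)
    (hA' : dist A A' + dist A' C = dist A C) (hAA' : dist A A' = τ)
    (hB' : dist B B' + dist B' C = dist B C) (hBB' : dist B B' = τ) :
    dist A' B' ≤ cFun D * Real.exp (-τ) :=
  isosceles_decrease_speed_general D τ A B C A' B' hiso hAB hA' hAA' hB' hBB'
end

section
/- Let ℍ be the hyperbolic plane (the upper half-plane with its hyperbolic metric) and let ε > 0. Let g be a bijective self-isometry of ℍ admitting an axis: an isometric embedding γ : ℝ → ℍ and a real l with 0 < l ≤ ε/10 such that g(γ(s)) = γ(s + l) for all s, and τ(g) := ⨅_{x} dist(x, g(x)) = l. Let m be the greatest positive integer with m·l ≤ ε/10. Then the Margulis tube 𝒯_ε(g) := ⋃_{i=1}^{m} {x ∈ ℍ : dist(x, g^i(x)) ≤ ε} is arccosh(√2)-quasiconvex: for all z₁, z₂ ∈ 𝒯_ε(g), every point w with dist(z₁,w) + dist(w,z₂) = dist(z₁,z₂) satisfies infDist(w, 𝒯_ε(g))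 ≤ arccosh(√2) = log(1+√2). -/
/-!
Embed `ℍ` in Minkowski space `ℝ^{1,2}` as the hyperboloid, `φ = toHyperboloid`, so that
`minkowski (φ z) (φ w) = -cosh (dist z w)`, and complete the axis `γ` of `g` to an orthonormal
frame `A = φ (γ 0)`, `B`, `N` with `φ (γ s) = cosh s • A + sinh s • B`. The coordinate
`n = normalCoord γ` along `N` is, up to sign, the `sinh` of the distance to the axis. An isometry
`h` translating the axis by `τ` boosts the `(A, B)`-coordinates and multiplies `n` by a fixed sign
`c`, so `cosh (dist x (h x)) = cosh τ + (n x)² (cosh τ - c)` increases with `|n x|`. If `w` lies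
between `z₁` and `z₂`, with `a = dist z₁ w` and `b = dist w z₂`, then
`sinh (a + b) • φ w = sinh b • φ z₁ + sinh a • φ z₂`, and `sinh a + sinh b ≤ sinh (a + b)` gives
`|n w| ≤ max |n z₁| |n z₂|`. So `gⁱ` displaces `w` at most as much as one of the `zⱼ`: the tube is
convex and the infimum is `0`.
-/

open UpperHalfPlane

/-- The Margulis tube `𝒯_ε(g) = ⋃_{1 ≤ i ≤ m} {x : dist x (gⁱ x) ≤ ε}` of a hyperbolic
isometry `g` of the hyperbolic plane. -/
def margulisTube (ε : ℝ) (g : UpperHalfPlane ≃ᵢ UpperHalfPlane) (m : ℕ) :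
    Set UpperHalfPlane :=
  ⋃ i ∈ Finset.Icc 1 m, {x : UpperHalfPlane | dist x ((g ^ i) x) ≤ ε}

theorem Real.sinh_add_sinh_le_sinh_add {a b : ℝ} (ha : 0 ≤ a) (hb : 0 ≤ b) :
    sinh a + sinh b ≤ sinh (a + b) := by
  rw [sinh_add]
  nlinarith [one_le_cosh a, one_le_cosh b, sinh_nonneg_iff.mpr ha, sinh_nonneg_iff.mpr hb]

theorem exists_sq_eq_one_and_comp_eq_mul {X K : Type*} [Field K] {f : X → K} {σ : X → X}
    (h : ∀ x y, f (σ x) * f (σ y) = f x * f y) : ∃ c : K, c ^ 2 = 1 ∧ ∀ x, f (σ x) = c * f x := by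
  by_cases hf : ∀ x, f x = 0
  · refine ⟨1, one_pow 2, fun x => ?_⟩
    rw [hf x, mul_zero, ← mul_self_eq_zero, h, hf x, mul_zero]
  obtain ⟨x₀, hx₀⟩ := not_forall.mp hf
  have hσx₀ : f (σ x₀) ≠ 0 := by
    intro h₀
    exact hx₀ (mul_self_eq_zero.mp (by rw [← h, h₀, mul_zero]))
  refine ⟨f x₀ / f (σ x₀), ?_, fun x => ?_⟩
  · rw [div_pow, div_eq_one_iff_eq (pow_ne_zero 2 hσx₀), sq, sq, h]
  · rw [div_mul_eq_mul_div, eq_div_iff hσx₀, mul_comm, h]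

namespace HyperboloidModel

open Real

noncomputable section

def minkowski : LinearMap.BilinForm ℝ (ℝ × ℝ × ℝ) :=
  LinearMap.mk₂ ℝ (fun u v => -(u.1 * v.1) + u.2.1 * v.2.1 + u.2.2 * v.2.2)
    (fun _ _ _ => by simp only [Prod.fst_add, Prod.snd_add]; ring)
    (fun _ _ _ => by simp only [Prod.smul_fst, Prod.smul_snd, smul_eq_mul]; ring)
    (fun _ _ _ => by simp only [Prod.fst_add, Prod.snd_add]; ring)
    (fun _ _ _ => by simp only [Prod.smul_fst, Prod.smul_snd, smul_eq_mul]; ring)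

theorem minkowski_apply (u v : ℝ × ℝ × ℝ) :
    minkowski u v = -(u.1 * v.1) + u.2.1 * v.2.1 + u.2.2 * v.2.2 := rfl

theorem minkowski_comm (u v : ℝ × ℝ × ℝ) : minkowski u v = minkowski v u := by
  simp only [minkowski_apply]; ring

def lorentzCross (a b : ℝ × ℝ × ℝ) : ℝ × ℝ × ℝ :=
  (a.2.1 * b.2.2 - a.2.2 * b.2.1, a.1 * b.2.2 - a.2.2 * b.1, a.2.1 * b.1 - a.1 * b.2.1)

theorem minkowski_lorentzCross_self (a b : ℝ × ℝ × ℝ) :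
    minkowski (lorentzCross a b) (lorentzCross a b) =
      minkowski a b ^ 2 - minkowski a a * minkowski b b := by
  simp only [minkowski_apply, lorentzCross]; ring

/-- Cramer's rule for the basis `a, b, lorentzCross a b`, read through
`minkowski (lorentzCross a b) c = -det (a, b, c)`. -/
theorem lorentzCross_gram (a b u : ℝ × ℝ × ℝ) :
    (minkowski a b ^ 2 - minkowski a a * minkowski b b) • u =
      (minkowski a b * minkowski u b - minkowski b b * minkowski u a) • a +
      (minkowski a b * minkowski u a - minkowski a a * minkowski u b) • b +
      minkowski u (lorentzCross a b) • lorentzCross a b := by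
  simp only [minkowski_apply, lorentzCross, Prod.ext_iff, Prod.smul_fst, Prod.smul_snd,
    Prod.fst_add, Prod.snd_add, smul_eq_mul]
  refine ⟨by ring, by ring, by ring⟩

theorem eq_zero_of_orthogonal_timelike {v u : ℝ × ℝ × ℝ} (hv : minkowski v v < 0)
    (hvu : minkowski v u = 0) (hu : minkowski u u ≤ 0) : u = 0 := by
  rw [minkowski_apply] at hv hvu hu
  have hu₀ : u.1 = 0 := by
    by_contra hne
    have hvu' : v.1 * u.1 = v.2.1 * u.2.1 + v.2.2 * u.2.2 := by linarith
    have h₁ : (v.2.1 ^ 2 + v.2.2 ^ 2) * (u.2.1 ^ 2 + u.2.2 ^ 2) ≤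
        (v.2.1 ^ 2 + v.2.2 ^ 2) * u.1 ^ 2 :=
      mul_le_mul_of_nonneg_left (by nlinarith) (by positivity)
    have h₂ : (v.2.1 ^ 2 + v.2.2 ^ 2) * u.1 ^ 2 < v.1 ^ 2 * u.1 ^ 2 :=
      mul_lt_mul_of_pos_right (by nlinarith) (by positivity)
    have h₃ : v.1 ^ 2 * u.1 ^ 2 ≤ (v.2.1 ^ 2 + v.2.2 ^ 2) * (u.2.1 ^ 2 + u.2.2 ^ 2) := by
      rw [← mul_pow, hvu']
      nlinarith [sq_nonneg (v.2.1 * u.2.2 - v.2.2 * u.2.1)]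
    linarith
  have hu₁ : u.2.1 = 0 := by nlinarith [sq_nonneg u.2.1, sq_nonneg u.2.2]
  have hu₂ : u.2.2 = 0 := by nlinarith [sq_nonneg u.2.1, sq_nonneg u.2.2]
  exact Prod.ext hu₀ (Prod.ext hu₁ hu₂)

theorem eq_of_minkowski_eq {p q : ℝ × ℝ × ℝ} (hp : minkowski p p < 0)
    (hpq : minkowski p q = minkowski p p) (hq : minkowski q q = minkowski p p) : p = q := by
  refine (sub_eq_zero.mp (eq_zero_of_orthogonal_timelike hp ?_ ?_)).symm
  · rw [map_sub, hpq, sub_self]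
  · simp only [map_sub, LinearMap.sub_apply, minkowski_comm q p, hpq, hq, sub_self, le_refl]

def toHyperboloid (z : ℍ) : ℝ × ℝ × ℝ :=
  ((z.re ^ 2 + z.im ^ 2 + 1) / (2 * z.im), z.re / z.im, (z.re ^ 2 + z.im ^ 2 - 1) / (2 * z.im))

theorem minkowski_toHyperboloid (z w : ℍ) :
    minkowski (toHyperboloid z) (toHyperboloid w) = -cosh (dist z w) := by
  have := z.im_pos.ne'
  have := w.im_pos.ne'
  rw [cosh_dist', minkowski_apply, toHyperboloid, toHyperboloid]
  field_simp
  ring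

theorem minkowski_toHyperboloid_self (z : ℍ) :
    minkowski (toHyperboloid z) (toHyperboloid z) = -1 := by
  rw [minkowski_toHyperboloid, dist_self, cosh_zero]

theorem sinh_dist_smul_toHyperboloid_of_dist_add_dist_eq {z₁ w z₂ : ℍ}
    (hw : dist z₁ w + dist w z₂ = dist z₁ z₂) (hd : 0 < dist z₁ z₂) :
    sinh (dist z₁ z₂) • toHyperboloid w =
      sinh (dist w z₂) • toHyperboloid z₁ + sinh (dist z₁ w) • toHyperboloid z₂ := by
  set a := dist z₁ w
  set b := dist w z₂
  rw [← hw] at hd ⊢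
  have h₁ : minkowski (toHyperboloid w) (toHyperboloid z₁) = -cosh a := by
    rw [minkowski_toHyperboloid, dist_comm]
  have h₂ : minkowski (toHyperboloid w) (toHyperboloid z₂) = -cosh b := minkowski_toHyperboloid _ _
  have h₁₂ : minkowski (toHyperboloid z₁) (toHyperboloid z₂) = -cosh (a + b) := by
    rw [minkowski_toHyperboloid, hw]
  have hsinh := sinh_add a b
  have hcosh := cosh_add a b
  apply eq_of_minkowski_eq
  · simp only [map_smul, LinearMap.smul_apply, minkowski_toHyperboloid_self, smul_eq_mul]
    nlinarith [sinh_pos_iff.mpr hd]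
  · simp only [map_add, map_smul, LinearMap.smul_apply, smul_eq_mul, h₁, h₂,
      minkowski_toHyperboloid_self]
    linear_combination sinh (a + b) * hsinh
  · simp only [map_add, map_smul, LinearMap.add_apply, LinearMap.smul_apply, smul_eq_mul,
      minkowski_toHyperboloid_self, h₁₂, minkowski_comm (toHyperboloid z₂)]
    linear_combination (sinh a) ^ 2 * cosh_sq b + (sinh b) ^ 2 * cosh_sq a +
      (sinh (a + b) + sinh a * cosh b + cosh a * sinh b) * hsinh - 2 * sinh a * sinh b * hcosh

section Axis

variable {γ : ℝ → ℍ}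

/-- Chosen so that `toHyperboloid (γ 1) = cosh 1 • toHyperboloid (γ 0) + sinh 1 • axisTangent γ`. -/
def axisTangent (γ : ℝ → ℍ) : ℝ × ℝ × ℝ :=
  (sinh 1)⁻¹ • (toHyperboloid (γ 1) - cosh 1 • toHyperboloid (γ 0))

def axisNormal (γ : ℝ → ℍ) : ℝ × ℝ × ℝ := lorentzCross (toHyperboloid (γ 0)) (axisTangent γ)

def baseCoord (γ : ℝ → ℍ) (x : ℍ) : ℝ := -minkowski (toHyperboloid x) (toHyperboloid (γ 0))

def tangentCoord (γ : ℝ → ℍ) (x : ℍ) : ℝ := minkowski (toHyperboloid x) (axisTangent γ)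

def normalCoord (γ : ℝ → ℍ) (x : ℍ) : ℝ := minkowski (toHyperboloid x) (axisNormal γ)

theorem minkowski_toHyperboloid_geodesic (hγ : Isometry γ) (s t : ℝ) :
    minkowski (toHyperboloid (γ s)) (toHyperboloid (γ t)) = -cosh (s - t) := by
  rw [minkowski_toHyperboloid, hγ.dist_eq, Real.dist_eq, cosh_abs]

theorem minkowski_toHyperboloid_zero_axisTangent (hγ : Isometry γ) :
    minkowski (toHyperboloid (γ 0)) (axisTangent γ) = 0 := by
  simp only [axisTangent, map_smul, map_sub, smul_eq_mul, minkowski_toHyperboloid_geodesic hγ,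
    zero_sub, sub_self, cosh_neg, cosh_zero]
  ring

theorem minkowski_axisTangent_self (hγ : Isometry γ) :
    minkowski (axisTangent γ) (axisTangent γ) = 1 := by
  have := (sinh_pos_iff.mpr one_pos).ne'
  simp only [axisTangent, map_smul, map_sub, LinearMap.smul_apply, LinearMap.sub_apply,
    smul_eq_mul, minkowski_toHyperboloid_geodesic hγ, sub_zero, zero_sub, sub_self, cosh_neg,
    cosh_zero]
  field_simp
  linear_combination cosh_sq 1

theorem minkowski_axisNormal_self (hγ : Isometry γ) :
    minkowski (axisNormal γ) (axisNormal γ) = 1 := by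
  rw [axisNormal, minkowski_lorentzCross_self, minkowski_toHyperboloid_zero_axisTangent hγ,
    minkowski_toHyperboloid_self, minkowski_axisTangent_self hγ]
  norm_num

theorem toHyperboloid_eq_coords (hγ : Isometry γ) (x : ℍ) :
    toHyperboloid x = baseCoord γ x • toHyperboloid (γ 0) + tangentCoord γ x • axisTangent γ +
      normalCoord γ x • axisNormal γ := by
  have h := lorentzCross_gram (toHyperboloid (γ 0)) (axisTangent γ) (toHyperboloid x)
  rw [minkowski_toHyperboloid_zero_axisTangent hγ, minkowski_toHyperboloid_self,
    minkowski_axisTangent_self hγ] at h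
  rw [baseCoord, tangentCoord, normalCoord, axisNormal]
  convert h using 3 <;> simp

theorem minkowski_toHyperboloid_eq_coords (hγ : Isometry γ) (x y : ℍ) :
    minkowski (toHyperboloid x) (toHyperboloid y) =
      -(baseCoord γ x * baseCoord γ y) + tangentCoord γ x * tangentCoord γ y +
        normalCoord γ x * normalCoord γ y := by
  conv_lhs => rw [toHyperboloid_eq_coords hγ x]
  simp only [map_add, map_smul, LinearMap.add_apply, LinearMap.smul_apply, smul_eq_mul,
    baseCoord, tangentCoord, normalCoord, minkowski_comm (toHyperboloid y)]
  ring

theorem baseCoord_sq_sub_tangentCoord_sq (hγ : Isometry γ) (x : ℍ) :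
    baseCoord γ x ^ 2 - tangentCoord γ x ^ 2 = 1 + normalCoord γ x ^ 2 := by
  linear_combination minkowski_toHyperboloid_eq_coords hγ x x - minkowski_toHyperboloid_self x

theorem toHyperboloid_geodesic (hγ : Isometry γ) (s : ℝ) :
    toHyperboloid (γ s) = cosh s • toHyperboloid (γ 0) + sinh s • axisTangent γ := by
  have hbase : baseCoord γ (γ s) = cosh s := by
    rw [baseCoord, minkowski_toHyperboloid_geodesic hγ, sub_zero, neg_neg]
  have htangent : tangentCoord γ (γ s) = sinh s := by
    have := (sinh_pos_iff.mpr one_pos).ne'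
    simp only [tangentCoord, axisTangent, map_smul, map_sub, smul_eq_mul,
      minkowski_toHyperboloid_geodesic hγ, sub_zero, cosh_sub]
    field_simp
    ring
  have hnormal : normalCoord γ (γ s) = 0 := by
    have := baseCoord_sq_sub_tangentCoord_sq hγ (γ s)
    rw [hbase, htangent, cosh_sq] at this
    exact pow_eq_zero_iff two_ne_zero |>.mp (by linarith)
  rw [toHyperboloid_eq_coords hγ (γ s), hbase, htangent, hnormal, zero_smul, add_zero]

theorem minkowski_toHyperboloid_geodesic_eq_coords (hγ : Isometry γ) (x : ℍ) (t : ℝ) :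
    minkowski (toHyperboloid x) (toHyperboloid (γ t)) =
      -(baseCoord γ x * cosh t) + tangentCoord γ x * sinh t := by
  rw [toHyperboloid_geodesic hγ, map_add, map_smul, map_smul, smul_eq_mul, smul_eq_mul,
    baseCoord, tangentCoord]
  ring

end Axis

section Translation

variable {γ : ℝ → ℍ} {h : ℍ → ℍ} {τ : ℝ}

theorem minkowski_toHyperboloid_map_geodesic (hh : Isometry h)
    (htr : ∀ s, h (γ s) = γ (s + τ)) (x : ℍ) (t : ℝ) :
    minkowski (toHyperboloid (h x)) (toHyperboloid (γ t)) =
      minkowski (toHyperboloid x) (toHyperboloid (γ (t - τ))) := by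
  rw [minkowski_toHyperboloid, minkowski_toHyperboloid, ← hh.dist_eq x (γ (t - τ)), htr,
    sub_add_cancel]

theorem baseCoord_map (hγ : Isometry γ) (hh : Isometry h) (htr : ∀ s, h (γ s) = γ (s + τ))
    (x : ℍ) : baseCoord γ (h x) = cosh τ * baseCoord γ x + sinh τ * tangentCoord γ x := by
  have hpair := minkowski_toHyperboloid_map_geodesic hh htr x 0
  rw [minkowski_toHyperboloid_geodesic_eq_coords hγ,
    minkowski_toHyperboloid_geodesic_eq_coords hγ, zero_sub, cosh_neg, sinh_neg, cosh_zero,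
    sinh_zero] at hpair
  linarith

theorem tangentCoord_map (hγ : Isometry γ) (hh : Isometry h) (htr : ∀ s, h (γ s) = γ (s + τ))
    (x : ℍ) : tangentCoord γ (h x) = sinh τ * baseCoord γ x + cosh τ * tangentCoord γ x := by
  have hpair := minkowski_toHyperboloid_map_geodesic hh htr x 1
  rw [minkowski_toHyperboloid_geodesic_eq_coords hγ,
    minkowski_toHyperboloid_geodesic_eq_coords hγ, baseCoord_map hγ hh htr, cosh_sub,
    sinh_sub] at hpair
  apply mul_right_cancel₀ (sinh_pos_iff.mpr one_pos).ne'
  linear_combination hpair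

theorem normalCoord_map_mul_normalCoord_map (hγ : Isometry γ) (hh : Isometry h)
    (htr : ∀ s, h (γ s) = γ (s + τ)) (x y : ℍ) :
    normalCoord γ (h x) * normalCoord γ (h y) = normalCoord γ x * normalCoord γ y := by
  have hpair := minkowski_toHyperboloid_eq_coords hγ (h x) (h y)
  rw [minkowski_toHyperboloid, hh.dist_eq, ← minkowski_toHyperboloid,
    minkowski_toHyperboloid_eq_coords hγ, baseCoord_map hγ hh htr, baseCoord_map hγ hh htr,
    tangentCoord_map hγ hh htr, tangentCoord_map hγ hh htr] at hpair
  linear_combination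
    -hpair + (baseCoord γ x * baseCoord γ y - tangentCoord γ x * tangentCoord γ y) * cosh_sq τ

theorem cosh_dist_map (hγ : Isometry γ) (hh : Isometry h) (htr : ∀ s, h (γ s) = γ (s + τ))
    (x : ℍ) : cosh (dist x (h x)) =
      (1 + normalCoord γ x ^ 2) * cosh τ - normalCoord γ x * normalCoord γ (h x) := by
  have hpair := minkowski_toHyperboloid_eq_coords hγ x (h x)
  rw [minkowski_toHyperboloid, baseCoord_map hγ hh htr, tangentCoord_map hγ hh htr] at hpair
  linear_combination -hpair + cosh τ * baseCoord_sq_sub_tangentCoord_sq hγ x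

theorem dist_map_le_of_abs_normalCoord_le (hγ : Isometry γ) (hh : Isometry h)
    (htr : ∀ s, h (γ s) = γ (s + τ)) {x y : ℍ} (hxy : |normalCoord γ x| ≤ |normalCoord γ y|) :
    dist x (h x) ≤ dist y (h y) := by
  obtain ⟨c, hc, hmap⟩ := exists_sq_eq_one_and_comp_eq_mul
    (normalCoord_map_mul_normalCoord_map hγ hh htr)
  have hcosh : cosh (dist x (h x)) ≤ cosh (dist y (h y)) := by
    rw [cosh_dist_map hγ hh htr, cosh_dist_map hγ hh htr, hmap, hmap]
    have hc₁ : 0 ≤ cosh τ - c := by nlinarith [one_le_cosh τ]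
    nlinarith [mul_le_mul_of_nonneg_left (sq_le_sq.mpr hxy) hc₁]
  rwa [cosh_le_cosh, abs_of_nonneg dist_nonneg, abs_of_nonneg dist_nonneg] at hcosh

end Translation

theorem abs_normalCoord_le_max_of_dist_add_dist_eq {γ : ℝ → ℍ} {z₁ w z₂ : ℍ}
    (hw : dist z₁ w + dist w z₂ = dist z₁ z₂) :
    |normalCoord γ w| ≤ max |normalCoord γ z₁| |normalCoord γ z₂| := by
  rcases (dist_nonneg (x := z₁) (y := z₂)).eq_or_lt with hd | hd
  · obtain rfl : z₁ = w := dist_le_zero.mp (by linarith [dist_nonneg (x := w) (y := z₂)])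
    exact le_max_left _ _
  have hcomb : sinh (dist z₁ z₂) * normalCoord γ w =
      sinh (dist w z₂) * normalCoord γ z₁ + sinh (dist z₁ w) * normalCoord γ z₂ := by
    have := congrArg (minkowski · (axisNormal γ))
      (sinh_dist_smul_toHyperboloid_of_dist_add_dist_eq hw hd)
    simp only [map_add, map_smul, LinearMap.add_apply, LinearMap.smul_apply, smul_eq_mul] at this
    exact this
  set M := max |normalCoord γ z₁| |normalCoord γ z₂|
  have ha := sinh_nonneg_iff.mpr (dist_nonneg (x := z₁) (y := w))
  have hb := sinh_nonneg_iff.mpr (dist_nonneg (x := w) (y := z₂))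
  refine le_of_mul_le_mul_left ?_ (sinh_pos_iff.mpr hd)
  calc sinh (dist z₁ z₂) * |normalCoord γ w|
      = |sinh (dist w z₂) * normalCoord γ z₁ + sinh (dist z₁ w) * normalCoord γ z₂| := by
        rw [← hcomb, abs_mul, abs_of_pos (sinh_pos_iff.mpr hd)]
    _ ≤ sinh (dist w z₂) * M + sinh (dist z₁ w) * M := by
        refine (abs_add_le _ _).trans (add_le_add ?_ ?_)
        · rw [abs_mul, abs_of_nonneg hb]
          exact mul_le_mul_of_nonneg_left (le_max_left _ _) hb
        · rw [abs_mul, abs_of_nonneg ha]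
          exact mul_le_mul_of_nonneg_left (le_max_right _ _) ha
    _ ≤ sinh (dist z₁ z₂) * M := by
        rw [← add_mul, ← hw, add_comm]
        exact mul_le_mul_of_nonneg_right (Real.sinh_add_sinh_le_sinh_add dist_nonneg dist_nonneg)
          ((abs_nonneg _).trans (le_max_left _ _))

end

end HyperboloidModel

open HyperboloidModel

theorem IsometryEquiv.pow_apply_of_apply_eq_add {α : Type*} [PseudoEMetricSpace α]
    {g : α ≃ᵢ α} {γ : ℝ → α} {l : ℝ} (htr : ∀ s, g (γ s) = γ (s + l)) (i : ℕ) (s : ℝ) :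
    (g ^ i) (γ s) = γ (s + i * l) := by
  induction i generalizing s with
  | zero => simp
  | succ n ih =>
    rw [pow_succ', IsometryEquiv.mul_apply, ih, htr]
    congr 1
    push_cast
    ring

theorem mem_margulisTube_of_dist_add_dist_eq {ε : ℝ} {g : ℍ ≃ᵢ ℍ} {γ : ℝ → ℍ} (hγ : Isometry γ)
    {l : ℝ} (htr : ∀ s, g (γ s) = γ (s + l)) {m : ℕ} {z₁ z₂ w : ℍ}
    (hz₁ : z₁ ∈ margulisTube ε g m) (hz₂ : z₂ ∈ margulisTube ε g m)
    (hw : dist z₁ w + dist w z₂ = dist z₁ z₂) : w ∈ margulisTube ε g m := by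
  have of_le : ∀ z ∈ margulisTube ε g m, |normalCoord γ w| ≤ |normalCoord γ z| →
      w ∈ margulisTube ε g m := by
    simp only [margulisTube, Set.mem_iUnion, Set.mem_ofPred_eq, exists_prop]
    rintro z ⟨i, hi, hz⟩ hwz
    exact ⟨i, hi, (dist_map_le_of_abs_normalCoord_le hγ (g ^ i).isometry
      (IsometryEquiv.pow_apply_of_apply_eq_add htr i) hwz).trans hz⟩
  rcases le_max_iff.mp (abs_normalCoord_le_max_of_dist_add_dist_eq (γ := γ) hw) with h | h
  exacts [of_le z₁ hz₁ h, of_le z₂ hz₂ h]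

theorem margulisTube_quasiconvex_general (ε : ℝ)
    (g : UpperHalfPlane ≃ᵢ UpperHalfPlane) (γ : ℝ → UpperHalfPlane) (hγ : Isometry γ)
    (l : ℝ)
    (htrans : ∀ s : ℝ, g (γ s) = γ (s + l))
    (m : ℕ) :
    ∀ z₁ ∈ margulisTube ε g m, ∀ z₂ ∈ margulisTube ε g m, ∀ w : UpperHalfPlane,
      dist z₁ w + dist w z₂ = dist z₁ z₂ →
        Metric.infDist w (margulisTube ε g m) ≤ Real.log (1 + Real.sqrt 2) := by
  intro z₁ hz₁ z₂ hz₂ w hw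
  rw [Metric.infDist_zero_of_mem (mem_margulisTube_of_dist_add_dist_eq hγ htrans hz₁ hz₂ hw)]
  exact Real.log_nonneg (by linarith [Real.sqrt_nonneg 2])

/-- Corollary 3.8 (qctube), hyperbolic case, for `X = ℍ`: the Margulis tube of a
hyperbolic isometry with translation length `l ≤ ε/10` is
`arccosh √2 = log (1+√2)`-quasiconvex. -/
theorem margulisTube_quasiconvex (ε : ℝ) (hε : 0 < ε)
    (g : UpperHalfPlane ≃ᵢ UpperHalfPlane) (γ : ℝ → UpperHalfPlane) (hγ : Isometry γ)
    (l : ℝ) (hl0 : 0 < l) (hl : l ≤ ε / 10)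
    (htrans : ∀ s : ℝ, g (γ s) = γ (s + l))
    (hτ : (⨅ x : UpperHalfPlane, dist x (g x)) = l)
    (m : ℕ) (hm1 : 1 ≤ m) (hm : (m : ℝ) * l ≤ ε / 10) (hm' : ε / 10 < ((m : ℝ) + 1) * l) :
    ∀ z₁ ∈ margulisTube ε g m, ∀ z₂ ∈ margulisTube ε g m, ∀ w : UpperHalfPlane,
      dist z₁ w + dist w z₂ = dist z₁ z₂ →
        Metric.infDist w (margulisTube ε g m) ≤ Real.log (1 + Real.sqrt 2) :=
  margulisTube_quasiconvex_general ε g γ hγ l htrans m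
end
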